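/- arXiv:1807.02837 — 2 statements merged into one kernel-verified Lean document; each statement's English description precedes it below -/
import Mathlib

section
/- Let l : (0,∞) → (0,∞) be slowly varying at 0. If α > 0, then ∫_{0}^{s} l(u) α u^{α−1} du < ∞ for all sufficiently small s > 0, and this integral is asymptotically equivalent to s^α l(s) as s → 0+, i.e. (∫_{0}^{s} l(u) α u^{α−1} du) / (s^α l(s)) → 1 as s → 0+. -/
/-!
Substituting `u = v s` turns the ratio into `∫₀¹ (l (v s) / l s) α v^(α-1) dv`, whose integrand
tends pointwise to `α v^(α-1)`, a function of integral `1`. Dominated convergence applies by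
Potter's bound `l (v s) ≤ e^δ v^(-δ) l s` (small `s`, `0 < v ≤ 1`, `δ = α / 2`). Potter's bound is
the additive statement `k (x + w) - k x ≤ δ (w + 1)` for `k x = log l (e^(-x))`, which follows by
chaining steps of length `1` from the uniform convergence theorem: `k (x + y) - k x → 0`
uniformly in `y ∈ [0, 1]`. That theorem is proved by Egorov's theorem and a pigeonhole argument
on measures.
-/

open MeasureTheory Filter Real Set

/-- `l : (0,∞) → (0,∞)` is slowly varying at `0`: for every `u > 0`,
`l(ut)/l(t) → 1` as `t → 0+`. -/
def SlowlyVaryingAtZero (l : ℝ → ℝ) : Prop :=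
  ∀ u : ℝ, 0 < u →
    Filter.Tendsto (fun t => l (u * t) / l t) (nhdsWithin 0 (Set.Ioi 0)) (nhds 1)

open scoped Topology

theorem exists_mem_add_mem_of_measureReal_gt {E : Set ℝ} {a b y : ℝ} (hE : MeasurableSet E)
    (hEab : E ⊆ Icc a b) (hy : 0 ≤ y) (hvol : volume.real (Icc a b) + y < 2 * volume.real E) :
    ∃ w ∈ E, w + y ∈ E := by
  have hsub : E ⊆ Icc (a - y) b := hEab.trans (Icc_subset_Icc (by linarith) le_rfl)
  have hshift : (· + y) ⁻¹' E ⊆ Icc (a - y) b := fun w hw =>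
    ⟨by linarith [(hEab hw).1], by linarith [(hEab hw).2]⟩
  refine nonempty_inter_of_measureReal_lt_add (μ := volume) (t := (· + y) ⁻¹' E)
    (hE.preimage (measurable_add_const y)) hsub hshift ?_ measure_Icc_lt_top.ne
  rw [Real.volume_real_Icc] at hvol ⊢
  simp only [measureReal_def, measure_preimage_add_right] at hvol ⊢
  have : max (b - (a - y)) 0 ≤ max (b - a) 0 + y := max_le (by linarith [le_max_left (b - a) 0])
    (by linarith [le_max_right (b - a) 0])
  linarith

theorem tendstoUniformlyOn_sub_of_tendsto_sub {k : ℝ → ℝ} (hkm : Measurable k)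
    (hk : ∀ y, Tendsto (fun x => k (x + y) - k x) atTop (𝓝 0)) :
    TendstoUniformlyOn (fun x y => k (x + y) - k x) 0 atTop (Icc 0 1) := by
  rw [Metric.tendstoUniformlyOn_iff]
  intro ε hε
  by_contra hfreq
  simp only [not_eventually, frequently_atTop, not_forall, not_lt, exists_prop] at hfreq
  choose x hx y hy hbig using fun n : ℕ => hfreq n
  have hx_top : Tendsto x atTop atTop := tendsto_atTop_mono hx tendsto_natCast_atTop_atTop
  have hxy_top : Tendsto (fun n => x n + y n) atTop atTop :=
    tendsto_atTop_mono (fun n => le_add_of_nonneg_right (hy n).1) hx_top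
  set F : ℕ → ℝ → ℝ := fun n z =>
    |k (x n + z) - k (x n)| + |k (x n + y n + z) - k (x n + y n)|
  have hF_meas : ∀ n, StronglyMeasurable (F n) := fun n =>
    ((((hkm.comp (measurable_const_add _)).sub_const _).abs).add
      (((hkm.comp (measurable_const_add _)).sub_const _).abs)).stronglyMeasurable
  have hF_lim : ∀ z, Tendsto (F · z) atTop (𝓝 0) := fun z => by
    simpa using ((hk z).comp hx_top).abs.add ((hk z).comp hxy_top).abs
  obtain ⟨t, ht_sub, ht_meas, ht_vol, hunif⟩ := tendstoUniformlyOn_of_ae_tendsto (μ := volume)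
    hF_meas stronglyMeasurable_const measurableSet_Icc (by simp [Real.volume_Icc])
    (ae_of_all _ fun z _ => hF_lim z) (ε := 1 / 4) (by norm_num)
  obtain ⟨m, hm⟩ := (Metric.tendstoUniformlyOn_iff.mp hunif (ε / 2) (half_pos hε)).exists
  have hvol : volume.real (Icc (0 : ℝ) 2) + y m < 2 * volume.real (Icc 0 2 \ t) := by
    have : volume.real t ≤ 1 / 4 := ENNReal.toReal_le_of_le_ofReal (by norm_num) ht_vol
    rw [measureReal_sdiff ht_sub ht_meas (by simp), Real.volume_real_Icc, sub_zero,
      max_eq_left zero_le_two]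
    linarith [(hy m).2]
  obtain ⟨w, hw, hwy⟩ := exists_mem_add_mem_of_measureReal_gt (measurableSet_Icc.diff ht_meas)
    sdiff_subset (hy m).1 hvol
  have hsmall : ∀ z ∈ Icc 0 2 \ t, F m z < ε / 2 := fun z hz => by
    simpa [abs_of_nonneg (by positivity : 0 ≤ F m z)] using hm z hz
  -- `x m + y m + w` is close to both `x m` and `x m + y m`.
  have hnear_x : |k (x m + y m + w) - k (x m)| < ε / 2 := by
    have := hsmall _ hwy
    simp only [F] at this
    rw [show x m + (w + y m) = x m + y m + w by ring] at this
    linarith [abs_nonneg (k (x m + y m + (w + y m)) - k (x m + y m))]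
  have hnear_xy : |k (x m + y m + w) - k (x m + y m)| < ε / 2 := by
    have := hsmall w hw
    simp only [F] at this
    linarith [abs_nonneg (k (x m + w) - k (x m))]
  have hfar := hbig m
  rw [Pi.zero_apply, dist_zero_left, Real.norm_eq_abs] at hfar
  linarith [abs_sub_le (k (x m + y m)) (k (x m + y m + w)) (k (x m)),
    abs_sub_comm (k (x m + y m)) (k (x m + y m + w))]

theorem eventually_abs_sub_le_mul_add_one {k : ℝ → ℝ} (hkm : Measurable k)
    (hk : ∀ y, Tendsto (fun x => k (x + y) - k x) atTop (𝓝 0)) {δ : ℝ} (hδ : 0 < δ) :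
    ∀ᶠ x in atTop, ∀ w, 0 ≤ w → |k (x + w) - k x| ≤ δ * (w + 1) := by
  obtain ⟨X, hX⟩ := eventually_atTop.mp
    (Metric.tendstoUniformlyOn_iff.mp (tendstoUniformlyOn_sub_of_tendsto_sub hkm hk) δ hδ)
  have hstep : ∀ x ≥ X, ∀ w ∈ Icc (0 : ℝ) 1, |k (x + w) - k x| ≤ δ := fun x hx w hw => by
    simpa [Real.dist_eq, abs_sub_comm (k x)] using (hX x hx w hw).le
  have hchain : ∀ n : ℕ, ∀ x ≥ X, ∀ w ∈ Icc (0 : ℝ) (n + 1),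
      |k (x + w) - k x| ≤ δ * (n + 1) := by
    intro n
    induction n with
    | zero => simpa using hstep
    | succ n ih =>
      intro x hx w hw
      rcases le_total w 1 with hw1 | hw1
      · have := hstep x hx w ⟨hw.1, hw1⟩
        push_cast
        nlinarith
      · have h1 := hstep x hx 1 ⟨zero_le_one, le_rfl⟩
        have h2 := ih (x + 1) (by linarith) (w - 1)
          ⟨by linarith, by push_cast at hw; linarith [hw.2]⟩
        rw [show x + 1 + (w - 1) = x + w by ring] at h2
        push_cast
        linarith [abs_sub_le (k (x + w)) (k (x + 1)) (k x)]
  refine eventually_atTop.mpr ⟨X, fun x hx w hw => ?_⟩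
  have hfloor := Nat.lt_floor_add_one w
  calc |k (x + w) - k x| ≤ δ * (⌊w⌋₊ + 1) := hchain _ x hx w ⟨hw, hfloor.le⟩
    _ ≤ δ * (w + 1) := by gcongr; exact Nat.floor_le hw

theorem SlowlyVaryingAtZero.tendsto_log_comp_exp_neg_sub {l : ℝ → ℝ} (hlpos : ∀ t > 0, 0 < l t)
    (hl : SlowlyVaryingAtZero l) (y : ℝ) :
    Tendsto (fun x => log (l (exp (-(x + y)))) - log (l (exp (-x)))) atTop (𝓝 0) := by
  have hexp : Tendsto (fun x => exp (-x)) atTop (𝓝[>] 0) :=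
    tendsto_nhdsWithin_of_tendsto_nhds_of_eventually_within _
      (tendsto_exp_atBot.comp tendsto_neg_atTop_atBot) (Eventually.of_forall fun x => exp_pos _)
  have hratio := ((continuousAt_log one_ne_zero).tendsto.comp
    ((hl _ (exp_pos (-y))).comp hexp))
  rw [log_one] at hratio
  refine hratio.congr fun x => ?_
  simp only [Function.comp_apply, neg_add, exp_add, mul_comm (exp (-y))]
  rw [log_div (hlpos _ (by positivity)).ne' (hlpos _ (exp_pos _)).ne']

theorem SlowlyVaryingAtZero.eventually_le_rpow_neg_mul {l : ℝ → ℝ} (hlmeas : Measurable l)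
    (hlpos : ∀ t > 0, 0 < l t) (hl : SlowlyVaryingAtZero l) {δ : ℝ} (hδ : 0 < δ) :
    ∀ᶠ s in 𝓝[>] 0, ∀ v ∈ Ioc (0 : ℝ) 1, l (v * s) ≤ exp δ * v ^ (-δ) * l s := by
  have hkm : Measurable fun x => log (l (exp (-x))) :=
    measurable_log.comp (hlmeas.comp (measurable_exp.comp measurable_neg))
  have hadd := eventually_abs_sub_le_mul_add_one hkm (hl.tendsto_log_comp_exp_neg_sub hlpos) hδ
  have hlog : Tendsto (fun s => -log s) (𝓝[>] 0) atTop :=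
    tendsto_neg_atBot_atTop.comp tendsto_log_nhdsGT_zero
  filter_upwards [hlog.eventually hadd, self_mem_nhdsWithin] with s hs (hs0 : 0 < s) v hv
  have hkey := (abs_le.mp (hs (-log v) (neg_nonneg.mpr (log_nonpos hv.1.le hv.2)))).2
  rw [neg_neg, ← neg_add, neg_neg, exp_log hs0, ← log_mul hs0.ne' hv.1.ne', mul_comm s v,
    exp_log (mul_pos hv.1 hs0)] at hkey
  have hlvs := hlpos _ (mul_pos hv.1 hs0)
  have hls := hlpos _ hs0
  calc l (v * s) = exp (log (l (v * s))) := (exp_log hlvs).symm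
    _ ≤ exp (δ + log v * -δ + log (l s)) := by gcongr; linarith
    _ = exp δ * v ^ (-δ) * l s := by rw [exp_add, exp_add, exp_log hls, rpow_def_of_pos hv.1]

section Rescaling

variable {E : Type*} [NormedAddCommGroup E] {s : ℝ}

theorem integrableOn_Ioo_zero_one_comp_mul_right_iff (f : ℝ → E) (hs : 0 < s) :
    IntegrableOn (fun v => f (v * s)) (Ioo 0 1) ↔ IntegrableOn f (Ioo 0 s) := by
  have hind : (Ioo 0 1).indicator (fun v => f (v * s)) =
      fun v => (Ioo 0 s).indicator f (v * s) := by
    ext v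
    rw [← indicator_comp_right (· * s), preimage_mul_const_Ioo₀ _ _ hs, zero_div, div_self hs.ne']
    rfl
  rw [← integrable_indicator_iff measurableSet_Ioo, ← integrable_indicator_iff measurableSet_Ioo,
    hind, integrable_comp_mul_right_iff _ hs.ne']

theorem setIntegral_Ioo_zero_one_comp_mul_right [NormedSpace ℝ E] (f : ℝ → E) (hs : 0 < s) :
    ∫ v in Ioo 0 1, f (v * s) = s⁻¹ • ∫ u in Ioo 0 s, f u := by
  rw [← integral_Ioc_eq_integral_Ioo, ← integral_Ioc_eq_integral_Ioo,
    ← intervalIntegral.integral_of_le zero_le_one, ← intervalIntegral.integral_of_le hs.le,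
    intervalIntegral.integral_comp_mul_right _ hs.ne', zero_mul, one_mul]

end Rescaling

theorem integrableOn_Ioo_zero_one_const_mul_rpow (c : ℝ) {β : ℝ} (hβ : -1 < β) :
    IntegrableOn (fun v => c * v ^ β) (Ioo 0 1) :=
  ((intervalIntegral.integrableOn_Ioo_rpow_iff one_pos).mpr hβ).const_mul c

theorem setIntegral_Ioo_zero_one_mul_rpow_sub_one {α : ℝ} (hα : 0 < α) :
    ∫ v in Ioo (0 : ℝ) 1, α * v ^ (α - 1) = 1 := by
  rw [← integral_Ioc_eq_integral_Ioo, ← intervalIntegral.integral_of_le zero_le_one,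
    intervalIntegral.integral_const_mul, integral_rpow (Or.inl (by linarith)), sub_add_cancel,
    one_rpow, zero_rpow hα.ne', sub_zero, mul_one_div_cancel hα.ne']

section Karamata

variable {l : ℝ → ℝ} {α s : ℝ}

theorem mul_rpow_sub_one_comp_mul_right (hs : 0 < s) (hls : l s ≠ 0) {v : ℝ} (hv : 0 ≤ v) :
    l (v * s) * (α * (v * s) ^ (α - 1)) =
      s ^ (α - 1) * l s * (l (v * s) / l s * (α * v ^ (α - 1))) := by
  rw [mul_rpow hv hs.le]
  field_simp

theorem integrableOn_Ioo_of_integrableOn_ratio (hs : 0 < s) (hls : l s ≠ 0)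
    (h : IntegrableOn (fun v => l (v * s) / l s * (α * v ^ (α - 1))) (Ioo 0 1)) :
    IntegrableOn (fun u => l u * (α * u ^ (α - 1))) (Ioo 0 s) := by
  rw [← integrableOn_Ioo_zero_one_comp_mul_right_iff _ hs]
  exact IntegrableOn.congr_fun (h.const_mul (s ^ (α - 1) * l s))
    (fun v hv => (mul_rpow_sub_one_comp_mul_right hs hls hv.1.le).symm) measurableSet_Ioo

theorem setIntegral_Ioo_div_eq_setIntegral_ratio (hs : 0 < s) (hls : 0 < l s) :
    (∫ u in Ioo 0 s, l u * (α * u ^ (α - 1))) / (s ^ α * l s) =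
      ∫ v in Ioo 0 1, l (v * s) / l s * (α * v ^ (α - 1)) := by
  have hc : s ^ (α - 1) * l s ≠ 0 := by positivity
  have hrescale : ∫ v in Ioo 0 1, l (v * s) / l s * (α * v ^ (α - 1)) =
      ∫ v in Ioo 0 1, (s ^ (α - 1) * l s)⁻¹ * (l (v * s) * (α * (v * s) ^ (α - 1))) :=
    setIntegral_congr_fun measurableSet_Ioo fun v hv => by
      rw [mul_rpow_sub_one_comp_mul_right hs hls.ne' hv.1.le, inv_mul_cancel_left₀ hc]
  rw [hrescale, integral_const_mul,
    setIntegral_Ioo_zero_one_comp_mul_right (fun u => l u * (α * u ^ (α - 1))) hs, smul_eq_mul,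
    rpow_sub_one hs.ne']
  generalize ∫ u in Ioo 0 s, l u * (α * u ^ (α - 1)) = I
  field_simp

theorem SlowlyVaryingAtZero.eventually_norm_ratio_le (hlmeas : Measurable l)
    (hlpos : ∀ t > 0, 0 < l t) (hl : SlowlyVaryingAtZero l) (hα : 0 < α) :
    ∀ᶠ s in 𝓝[>] 0, ∀ v ∈ Ioo (0 : ℝ) 1,
      ‖l (v * s) / l s * (α * v ^ (α - 1))‖ ≤ exp (α / 2) * α * v ^ (α / 2 - 1) := by
  filter_upwards [hl.eventually_le_rpow_neg_mul hlmeas hlpos (half_pos hα), self_mem_nhdsWithin]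
    with s hPotter (hs : 0 < s) v hv
  have hls := hlpos s hs
  have hlvs := hlpos _ (mul_pos hv.1 hs)
  have hpow : 0 < α * v ^ (α - 1) := mul_pos hα (rpow_pos_of_pos hv.1 _)
  rw [Real.norm_of_nonneg (mul_pos (div_pos hlvs hls) hpow).le]
  calc l (v * s) / l s * (α * v ^ (α - 1))
      ≤ exp (α / 2) * v ^ (-(α / 2)) * (α * v ^ (α - 1)) := by
        refine mul_le_mul_of_nonneg_right ?_ hpow.le
        rw [div_le_iff₀ hls]
        exact hPotter v ⟨hv.1, hv.2.le⟩
    _ = exp (α / 2) * α * v ^ (α / 2 - 1) := by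
        rw [show α / 2 - 1 = -(α / 2) + (α - 1) by ring, rpow_add hv.1]
        ring

theorem measurable_ratio_integrand (hlmeas : Measurable l) :
    Measurable fun v => l (v * s) / l s * (α * v ^ (α - 1)) :=
  ((hlmeas.comp (measurable_mul_const s)).div_const _).mul
    ((measurable_id.pow_const _).const_mul _)

theorem SlowlyVaryingAtZero.eventually_integrableOn_ratio (hlmeas : Measurable l)
    (hlpos : ∀ t > 0, 0 < l t) (hl : SlowlyVaryingAtZero l) (hα : 0 < α) :
    ∀ᶠ s in 𝓝[>] 0, IntegrableOn (fun v => l (v * s) / l s * (α * v ^ (α - 1))) (Ioo 0 1) := by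
  filter_upwards [hl.eventually_norm_ratio_le hlmeas hlpos hα] with s hbound
  exact (integrableOn_Ioo_zero_one_const_mul_rpow _ (by linarith)).mono'
    (measurable_ratio_integrand hlmeas).aestronglyMeasurable
    (ae_restrict_of_forall_mem measurableSet_Ioo hbound)

theorem SlowlyVaryingAtZero.tendsto_setIntegral_ratio (hlmeas : Measurable l)
    (hlpos : ∀ t > 0, 0 < l t) (hl : SlowlyVaryingAtZero l) (hα : 0 < α) :
    Tendsto (fun s => ∫ v in Ioo 0 1, l (v * s) / l s * (α * v ^ (α - 1))) (𝓝[>] 0) (𝓝 1) := by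
  have hDCT := tendsto_integral_filter_of_dominated_convergence (μ := volume.restrict (Ioo 0 1))
    (f := fun v => α * v ^ (α - 1)) _
    (Eventually.of_forall fun s => (measurable_ratio_integrand hlmeas).aestronglyMeasurable)
    ((hl.eventually_norm_ratio_le hlmeas hlpos hα).mono fun s hs =>
      ae_restrict_of_forall_mem measurableSet_Ioo hs)
    (integrableOn_Ioo_zero_one_const_mul_rpow _ (by linarith))
    (ae_restrict_of_forall_mem measurableSet_Ioo fun v hv => by
      simpa using (hl v hv.1).mul_const (α * v ^ (α - 1)))
  rwa [setIntegral_Ioo_zero_one_mul_rpow_sub_one hα] at hDCT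

end Karamata

/-- If `l` is slowly varying at `0` and `α > 0`, then `∫_0^s l(u) α u^{α-1} du` is finite for all
sufficiently small `s > 0`, and it is asymptotically equivalent to `s^α l(s)` as `s → 0+`. -/
theorem stmt_4 (l : ℝ → ℝ) (hlmeas : Measurable l) (hlpos : ∀ t > 0, 0 < l t)
    (hl : SlowlyVaryingAtZero l) (α : ℝ) (hα : 0 < α) :
    (∀ᶠ s in nhdsWithin (0 : ℝ) (Set.Ioi 0),
      MeasureTheory.IntegrableOn (fun u => l u * (α * u ^ (α - 1))) (Set.Ioo 0 s)) ∧
    Filter.Tendsto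
      (fun s => (∫ u in Set.Ioo 0 s, l u * (α * u ^ (α - 1))) / (s ^ α * l s))
      (nhdsWithin 0 (Set.Ioi 0)) (nhds 1) := by
  constructor
  · filter_upwards [hl.eventually_integrableOn_ratio hlmeas hlpos hα, self_mem_nhdsWithin]
      with s hint (hs : 0 < s)
    exact integrableOn_Ioo_of_integrableOn_ratio hs (hlpos s hs).ne' hint
  · refine (hl.tendsto_setIntegral_ratio hlmeas hlpos hα).congr' ?_
    filter_upwards [self_mem_nhdsWithin] with s (hs : 0 < s)
    exact (setIntegral_Ioo_div_eq_setIntegral_ratio hs (hlpos s hs)).symm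
end

section
/- Let α ∈ (1,2) and let G, G₀ : [0,∞) → [0,∞) be two measurable functions each satisfying the nonlinear delay equation H(θ) = ∫_0^θ exp{ − (α/(α−1)) ∫_0^1 H(r u^{1/(α−1)})^{α−1} u^{−1} du } dr for all θ ≥ 0. Define F(θ) := |G(θ)^{α−1} − G₀(θ)^{α−1}|^{1/(α−1)}. Then F(θ) ≤ α^{1/(α−1)} ∫_0^θ ( ∫_0^1 F(r u^{1/(α−1)})^{α−1} u^{−1} du )^{1/(α−1)} dr for all θ ≥ 0. -/
/-!
Write `β = α - 1`, `p = 1/β ≥ 1` and `I_H(r) = ∫_0^1 H(r u^{1/β})^β u⁻¹ du`. The delay equation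
says exactly that `G(θ)^β` is the `L^p(0, θ)` norm of `r ↦ exp(-α I_G(r))`. Minkowski's inequality
bounds `|G(θ)^β - G₀(θ)^β|` by the `L^p` norm of the difference of the two exponentials, and since
`exp(-·)` is 1-Lipschitz on `[0, ∞)` that difference is at most `α |I_G - I_{G₀}| ≤ α I_F`. Taking
`p`-th powers gives the estimate. All integrals are genuine (not junk values) because a nonnegative
solution satisfies `G(θ) ≤ θ`, which bounds the inner integrands by `r^β`.
-/

open MeasureTheory Real Set

lemma abs_exp_neg_sub_exp_neg_le {x y : ℝ} (hx : 0 ≤ x) (hy : 0 ≤ y) :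
    |exp (-x) - exp (-y)| ≤ |x - y| := by
  wlog hyx : y ≤ x generalizing x y
  · rw [abs_sub_comm, abs_sub_comm x]
    exact this hy hx (le_of_not_ge hyx)
  have hexp : exp (-x) = exp (-y) * exp (y - x) := by rw [← exp_add]; ring_nf
  have hlin : 1 - exp (y - x) ≤ x - y := by linarith [add_one_le_exp (y - x)]
  have hexp_le : exp (-y) ≤ 1 := exp_le_one_iff.2 (by linarith)
  have hdiff_nonneg : 0 ≤ 1 - exp (y - x) := by
    linarith [exp_le_one_iff.2 (show y - x ≤ 0 by linarith)]
  rw [abs_sub_comm, abs_of_nonneg (sub_nonneg.2 (exp_le_exp.2 (by linarith))), hexp]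
  calc exp (-y) - exp (-y) * exp (y - x) = exp (-y) * (1 - exp (y - x)) := by ring
    _ ≤ 1 * (x - y) := mul_le_mul hexp_le hlin hdiff_nonneg zero_le_one
    _ = |x - y| := by rw [one_mul, abs_of_nonneg (by linarith)]

section lpNorm

variable {X E : Type*} [MeasurableSpace X] [NormedAddCommGroup E] {μ : Measure X} {p : ENNReal}
  {f g : X → E}

lemma abs_lpNorm_sub_lpNorm_le (hp : 1 ≤ p) (hf : MemLp f p μ) (hg : MemLp g p μ) :
    |lpNorm f p μ - lpNorm g p μ| ≤ lpNorm (f - g) p μ := by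
  have h₁ := lpNorm_le_lpNorm_add_lpNorm_sub' (f := f) hg hp
  have h₂ := lpNorm_le_lpNorm_add_lpNorm_sub (f := g) hf hp
  exact abs_sub_le_iff.2 ⟨by linarith, by linarith⟩

lemma lpNorm_mono_ae_real {h : X → ℝ} (hh : MemLp h p μ) (hfh : ∀ᵐ x ∂μ, ‖f x‖ ≤ h x) :
    lpNorm f p μ ≤ lpNorm h p μ := by
  by_cases hf : AEStronglyMeasurable f μ
  · rw [← toReal_eLpNorm hf, ← toReal_eLpNorm hh.aestronglyMeasurable]
    exact ENNReal.toReal_mono hh.eLpNorm_ne_top (eLpNorm_mono_ae_real hfh)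
  · simp [lpNorm_of_not_aestronglyMeasurable hf]

end lpNorm

noncomputable def delayIntegral (β : ℝ) (H : ℝ → ℝ) (r : ℝ) : ℝ :=
  ∫ u in Ioo (0 : ℝ) 1, H (r * u ^ (1 / β)) ^ β * u⁻¹

def SolvesDelayEquation (α : ℝ) (G : ℝ → ℝ) : Prop :=
  ∀ θ ≥ (0 : ℝ), G θ = ∫ r in Ioo 0 θ, exp (-(α / (α - 1)) * delayIntegral (α - 1) G r)

section delayIntegral

variable {β r : ℝ} {H : ℝ → ℝ}

lemma measurable_delayIntegral (hH : Measurable H) : Measurable (delayIntegral β H) := by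
  have : Measurable fun q : ℝ × ℝ => H (q.1 * q.2 ^ (1 / β)) ^ β * q.2⁻¹ := by fun_prop
  exact this.stronglyMeasurable.integral_prod_right'.measurable

lemma delayIntegrand_nonneg (hH₀ : ∀ t ≥ 0, 0 ≤ H t) (hr : 0 ≤ r) {u : ℝ} (hu : u ∈ Ioo 0 1) :
    0 ≤ H (r * u ^ (1 / β)) ^ β * u⁻¹ :=
  mul_nonneg (rpow_nonneg (hH₀ _ (mul_nonneg hr (rpow_nonneg hu.1.le _))) _)
    (inv_nonneg.2 hu.1.le)

lemma delayIntegrand_le (hβ : 0 < β) (hH₀ : ∀ t ≥ 0, 0 ≤ H t) (hH : ∀ t ≥ 0, H t ≤ t)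
    (hr : 0 ≤ r) {u : ℝ} (hu : u ∈ Ioo 0 1) : H (r * u ^ (1 / β)) ^ β * u⁻¹ ≤ r ^ β := by
  have hu₀ : 0 ≤ u ^ (1 / β) := rpow_nonneg hu.1.le _
  have hH_le := rpow_le_rpow (hH₀ _ (mul_nonneg hr hu₀)) (hH _ (mul_nonneg hr hu₀)) hβ.le
  rw [mul_rpow hr hu₀, ← rpow_mul hu.1.le, one_div_mul_cancel hβ.ne', rpow_one] at hH_le
  calc H (r * u ^ (1 / β)) ^ β * u⁻¹ ≤ r ^ β * u * u⁻¹ :=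
        mul_le_mul_of_nonneg_right hH_le (inv_nonneg.2 hu.1.le)
    _ = r ^ β := by rw [mul_assoc, mul_inv_cancel₀ hu.1.ne', mul_one]

lemma integrableOn_delayIntegrand (hβ : 0 < β) (hHm : Measurable H) (hH₀ : ∀ t ≥ 0, 0 ≤ H t)
    (hH : ∀ t ≥ 0, H t ≤ t) (hr : 0 ≤ r) :
    IntegrableOn (fun u => H (r * u ^ (1 / β)) ^ β * u⁻¹) (Ioo 0 1) := by
  refine Measure.integrableOn_of_bounded (M := r ^ β) measure_Ioo_lt_top.ne (by fun_prop) ?_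
  filter_upwards [ae_restrict_mem measurableSet_Ioo] with u hu
  rw [Real.norm_of_nonneg (delayIntegrand_nonneg hH₀ hr hu)]
  exact delayIntegrand_le hβ hH₀ hH hr hu

lemma delayIntegral_nonneg (hH₀ : ∀ t ≥ 0, 0 ≤ H t) (hr : 0 ≤ r) : 0 ≤ delayIntegral β H r :=
  setIntegral_nonneg measurableSet_Ioo fun _ hu => delayIntegrand_nonneg hH₀ hr hu

lemma delayIntegral_le (hβ : 0 < β) (hH₀ : ∀ t ≥ 0, 0 ≤ H t) (hH : ∀ t ≥ 0, H t ≤ t)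
    (hr : 0 ≤ r) : delayIntegral β H r ≤ r ^ β := by
  calc delayIntegral β H r ≤ ∫ _ in Ioo (0 : ℝ) 1, r ^ β :=
        integral_mono_of_nonneg
          (ae_restrict_of_forall_mem measurableSet_Ioo fun _ hu =>
            delayIntegrand_nonneg hH₀ hr hu)
          (integrableOn_const measure_Ioo_lt_top.ne)
          (ae_restrict_of_forall_mem measurableSet_Ioo fun _ hu =>
            delayIntegrand_le hβ hH₀ hH hr hu)
    _ = r ^ β := by simp

lemma abs_delayIntegral_sub_le {G G₀ F : ℝ → ℝ}
    (hG : IntegrableOn (fun u => G (r * u ^ (1 / β)) ^ β * u⁻¹) (Ioo 0 1))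
    (hG₀ : IntegrableOn (fun u => G₀ (r * u ^ (1 / β)) ^ β * u⁻¹) (Ioo 0 1))
    (hF : ∀ t, F t ^ β = |G t ^ β - G₀ t ^ β|) :
    |delayIntegral β G r - delayIntegral β G₀ r| ≤ delayIntegral β F r := by
  unfold delayIntegral
  rw [← integral_sub hG hG₀]
  refine abs_integral_le_integral_abs.trans_eq
    (setIntegral_congr_fun measurableSet_Ioo fun u hu => ?_)
  rw [← sub_mul, abs_mul, abs_of_nonneg (inv_nonneg.2 hu.1.le), hF]

end delayIntegral

lemma SolvesDelayEquation.le_self {α : ℝ} {G : ℝ → ℝ} (hα : 1 < α) (hG : SolvesDelayEquation α G)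
    (hG₀ : ∀ t ≥ 0, 0 ≤ G t) {θ : ℝ} (hθ : 0 ≤ θ) : G θ ≤ θ := by
  have hexp_le : ∀ r ∈ Ioo 0 θ, exp (-(α / (α - 1)) * delayIntegral (α - 1) G r) ≤ 1 := by
    intro r hr
    have : 0 ≤ α / (α - 1) := div_nonneg (by linarith) (by linarith)
    exact exp_le_one_iff.2 (by nlinarith [delayIntegral_nonneg (β := α - 1) hG₀ hr.1.le])
  calc G θ ≤ ∫ _ in Ioo 0 θ, (1 : ℝ) := by
        rw [hG θ hθ]
        exact integral_mono_of_nonneg (ae_of_all _ fun _ => (exp_pos _).le)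
          (integrableOn_const measure_Ioo_lt_top.ne)
          (ae_restrict_of_forall_mem measurableSet_Ioo hexp_le)
    _ = θ := by simp [hθ]

lemma SolvesDelayEquation.rpow_eq_lpNorm {α : ℝ} {G : ℝ → ℝ} (hα : 1 < α)
    (hG : SolvesDelayEquation α G) (hGm : Measurable G) {θ : ℝ} (hθ : 0 ≤ θ) :
    G θ ^ (α - 1) = lpNorm (fun r => exp (-(α * delayIntegral (α - 1) G r)))
      (ENNReal.ofReal (1 / (α - 1))) (volume.restrict (Ioo 0 θ)) := by
  have hβ : 0 < α - 1 := by linarith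
  have hm : Measurable fun r => exp (-(α * delayIntegral (α - 1) G r)) :=
    ((measurable_delayIntegral hGm).const_mul α).neg.exp
  rw [lpNorm_eq_integral_norm_rpow_toReal (by simpa using hβ) ENNReal.ofReal_ne_top
    hm.aestronglyMeasurable,
    ENNReal.toReal_ofReal (by positivity), one_div, inv_inv, hG θ hθ]
  congr 1
  refine setIntegral_congr_fun measurableSet_Ioo fun r _ => ?_
  rw [norm_of_nonneg (exp_pos _).le, ← exp_mul]
  congr 1
  field_simp

section memLp

variable {β c θ : ℝ} {H : ℝ → ℝ} {p : ENNReal}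

lemma memLp_exp_neg_mul_delayIntegral (hc : 0 ≤ c) (hHm : Measurable H)
    (hH₀ : ∀ t ≥ 0, 0 ≤ H t) :
    MemLp (fun r => exp (-(c * delayIntegral β H r))) p (volume.restrict (Ioo 0 θ)) := by
  refine .of_bound (((measurable_delayIntegral hHm).const_mul c).neg.exp.aestronglyMeasurable) 1 ?_
  refine ae_restrict_of_forall_mem measurableSet_Ioo fun r hr => ?_
  rw [norm_of_nonneg (exp_pos _).le, exp_le_one_iff, neg_nonpos]
  exact mul_nonneg hc (delayIntegral_nonneg hH₀ hr.1.le)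

lemma memLp_delayIntegral (hβ : 0 < β) (hHm : Measurable H) (hH₀ : ∀ t ≥ 0, 0 ≤ H t)
    (hH : ∀ t ≥ 0, H t ≤ t) : MemLp (delayIntegral β H) p (volume.restrict (Ioo 0 θ)) := by
  refine .of_bound (measurable_delayIntegral hHm).aestronglyMeasurable (θ ^ β) ?_
  refine ae_restrict_of_forall_mem measurableSet_Ioo fun r hr => ?_
  rw [norm_of_nonneg (delayIntegral_nonneg hH₀ hr.1.le)]
  exact (delayIntegral_le hβ hH₀ hH hr.1.le).trans (rpow_le_rpow hr.1.le hr.2.le hβ.le)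

end memLp

lemma rpow_abs_rpow_sub_rpow_le {β a b t : ℝ} (hβ : 0 < β) (ha : 0 ≤ a) (hb : 0 ≤ b)
    (hat : a ≤ t) (hbt : b ≤ t) : |a ^ β - b ^ β| ^ (1 / β) ≤ t := by
  have ht : 0 ≤ t := ha.trans hat
  calc |a ^ β - b ^ β| ^ (1 / β) ≤ (t ^ β) ^ (1 / β) := by
        gcongr
        exact abs_sub_le_of_nonneg_of_le (by positivity) (by gcongr) (by positivity) (by gcongr)
    _ = t := by rw [one_div, rpow_rpow_inv ht hβ.ne']

lemma rpow_le_lpNorm_delayIntegral {α θ : ℝ} {G G₀ F : ℝ → ℝ} (hα₁ : 1 < α) (hα₂ : α < 2)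
    (hG : SolvesDelayEquation α G) (hG₀ : SolvesDelayEquation α G₀)
    (hGm : Measurable G) (hG₀m : Measurable G₀)
    (hG_nonneg : ∀ t ≥ 0, 0 ≤ G t) (hG₀_nonneg : ∀ t ≥ 0, 0 ≤ G₀ t)
    (hF : ∀ t, F t = |G t ^ (α - 1) - G₀ t ^ (α - 1)| ^ (1 / (α - 1))) (hθ : 0 ≤ θ) :
    F θ ^ (α - 1) ≤ lpNorm (fun r => α * delayIntegral (α - 1) F r)
      (ENNReal.ofReal (1 / (α - 1))) (volume.restrict (Ioo 0 θ)) := by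
  have hβ : 0 < α - 1 := by linarith
  have hp : 1 ≤ ENNReal.ofReal (1 / (α - 1)) := by
    rw [ENNReal.one_le_ofReal, le_div_iff₀ hβ]; linarith
  have hFpow : ∀ t, F t ^ (α - 1) = |G t ^ (α - 1) - G₀ t ^ (α - 1)| := fun t => by
    rw [hF, one_div, rpow_inv_rpow (abs_nonneg _) hβ.ne']
  have hFm : Measurable F := by rw [funext hF]; fun_prop
  have hF_nonneg : ∀ t ≥ 0, 0 ≤ F t := fun t _ => hF t ▸ rpow_nonneg (abs_nonneg _) _
  have hG_le : ∀ t ≥ 0, G t ≤ t := fun _ ht => hG.le_self hα₁ hG_nonneg ht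
  have hG₀_le : ∀ t ≥ 0, G₀ t ≤ t := fun _ ht => hG₀.le_self hα₁ hG₀_nonneg ht
  have hF_le : ∀ t ≥ 0, F t ≤ t := fun t ht => hF t ▸
    rpow_abs_rpow_sub_rpow_le hβ (hG_nonneg t ht) (hG₀_nonneg t ht) (hG_le t ht) (hG₀_le t ht)
  have hdiff : ∀ᵐ r ∂volume.restrict (Ioo 0 θ),
      ‖exp (-(α * delayIntegral (α - 1) G r)) - exp (-(α * delayIntegral (α - 1) G₀ r))‖ ≤
        α * delayIntegral (α - 1) F r := by
    refine ae_restrict_of_forall_mem measurableSet_Ioo fun r hr => ?_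
    have hα : 0 < α := by linarith
    calc _ ≤ |α * delayIntegral (α - 1) G r - α * delayIntegral (α - 1) G₀ r| :=
          abs_exp_neg_sub_exp_neg_le (mul_nonneg hα.le (delayIntegral_nonneg hG_nonneg hr.1.le))
            (mul_nonneg hα.le (delayIntegral_nonneg hG₀_nonneg hr.1.le))
      _ = α * |delayIntegral (α - 1) G r - delayIntegral (α - 1) G₀ r| := by
          rw [← mul_sub, abs_mul, abs_of_pos hα]
      _ ≤ α * delayIntegral (α - 1) F r := by
          gcongr
          exact abs_delayIntegral_sub_le
            (integrableOn_delayIntegrand hβ hGm hG_nonneg hG_le hr.1.le)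
            (integrableOn_delayIntegrand hβ hG₀m hG₀_nonneg hG₀_le hr.1.le) hFpow
  rw [hFpow, hG.rpow_eq_lpNorm hα₁ hGm hθ, hG₀.rpow_eq_lpNorm hα₁ hG₀m hθ]
  exact (abs_lpNorm_sub_lpNorm_le hp (memLp_exp_neg_mul_delayIntegral (by linarith) hGm hG_nonneg)
    (memLp_exp_neg_mul_delayIntegral (by linarith) hG₀m hG₀_nonneg)).trans
    (lpNorm_mono_ae_real ((memLp_delayIntegral hβ hFm hF_nonneg hF_le).const_mul α) hdiff)

/-- The key estimate in the uniqueness proof of Lemma A.2: if `G` and `G₀` are two measurable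
nonnegative solutions of the nonlinear delay equation, then
`F(θ) := |G(θ)^{α-1} - G₀(θ)^{α-1}|^{1/(α-1)}` satisfies
`F(θ) ≤ α^{1/(α-1)} ∫_0^θ (∫_0^1 F(r u^{1/(α-1)})^{α-1} u⁻¹ du)^{1/(α-1)} dr`. -/
theorem stmt_14 (α : ℝ) (hα1 : 1 < α) (hα2 : α < 2)
    (G G₀ : ℝ → ℝ) (hGmeas : Measurable G) (hG₀meas : Measurable G₀)
    (hGnonneg : ∀ θ ≥ (0 : ℝ), 0 ≤ G θ) (hG₀nonneg : ∀ θ ≥ (0 : ℝ), 0 ≤ G₀ θ)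
    (hGeq : ∀ θ ≥ (0 : ℝ), G θ = ∫ r in Set.Ioo 0 θ,
      Real.exp (-(α / (α - 1)) *
        ∫ u in Set.Ioo (0:ℝ) 1, G (r * u ^ (1 / (α - 1))) ^ (α - 1) * u⁻¹))
    (hG₀eq : ∀ θ ≥ (0 : ℝ), G₀ θ = ∫ r in Set.Ioo 0 θ,
      Real.exp (-(α / (α - 1)) *
        ∫ u in Set.Ioo (0:ℝ) 1, G₀ (r * u ^ (1 / (α - 1))) ^ (α - 1) * u⁻¹))
    (F : ℝ → ℝ)
    (hF : ∀ θ : ℝ, F θ = |G θ ^ (α - 1) - G₀ θ ^ (α - 1)| ^ (1 / (α - 1))) :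
    ∀ θ ≥ (0 : ℝ), F θ ≤ α ^ (1 / (α - 1)) * ∫ r in Set.Ioo 0 θ,
      (∫ u in Set.Ioo (0:ℝ) 1, F (r * u ^ (1 / (α - 1))) ^ (α - 1) * u⁻¹) ^ (1 / (α - 1)) := by
  intro θ hθ
  have hβ : 0 < α - 1 := by linarith
  have hF_nonneg : ∀ t, 0 ≤ F t := fun t => hF t ▸ rpow_nonneg (abs_nonneg _) _
  have hJ_nonneg : ∀ r ∈ Ioo 0 θ, 0 ≤ delayIntegral (α - 1) F r :=
    fun r hr => delayIntegral_nonneg (fun t _ => hF_nonneg t) hr.1.le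
  have hJm : Measurable fun r => α * delayIntegral (α - 1) F r :=
    (measurable_delayIntegral (by rw [funext hF]; fun_prop)).const_mul α
  have hFθ := rpow_le_lpNorm_delayIntegral hα1 hα2 hGeq hG₀eq hGmeas hG₀meas hGnonneg hG₀nonneg
    hF hθ
  rw [lpNorm_eq_integral_norm_rpow_toReal (by simpa using hβ) ENNReal.ofReal_ne_top
    hJm.aestronglyMeasurable, ENNReal.toReal_ofReal (by positivity), inv_div, div_one,
    rpow_le_rpow_iff (hF_nonneg θ) (by positivity) hβ] at hFθ
  refine hFθ.trans_eq ?_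
  rw [← integral_const_mul]
  refine setIntegral_congr_fun measurableSet_Ioo fun r hr => ?_
  rw [norm_of_nonneg (mul_nonneg (by linarith) (hJ_nonneg r hr)),
    mul_rpow (by linarith) (hJ_nonneg r hr)]
  rfl
end
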